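/- arXiv:1712.03200 — 3 statements merged into one kernel-verified Lean document; each statement's English description precedes it below -/
import Mathlib

section
/- With D(c) and J(c) as defined for clans in {+,•}ⁿ, one has D(c) = {d ∈ {+,•}ⁿ : d_i = c_i for all i ∉ J(c)}, where indices in J(c) are the positions n-j for j ∈ J(c) (at which c has •, but d may have + or •). -/
/-!
Removing the first letter `c₀` of a clan `c` of length `n + 1` does not change `h_j` for
`j ≤ n`, because `h_j` only reads the last `j` letters. Hence `J(c)` consists of `J(c')` for the
tail `c'`, together with possibly `j = n`, whose position `n - j - 1 = 0` is the first letter;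
and `n ∈ J(c)` is exactly the condition under which the recursion for `D(c)` lets the first
letter of `d` be `+` as well as `•`. The theorem follows by induction on `n`.
-/

/-- A clan of length `n` is a string in `{+, •}ⁿ`, encoded as `Fin n → Bool`
with `true` representing `+` and `false` representing `•` (a number). -/
abbrev Clan (n : ℕ) := Fin n → Bool

/-- The sequence `h_j` attached to a clan `c = (c₁, …, c_n)`: `h₀ = 0`, and
`h_j = h_{j-1}` if `c_{n-j+1} = •`, `h_j = h_{j-1} + 1` if `c_{n-j+1} = +` and
`h_{j-1} = j - 1`, `h_j = h_{j-1} + 2` if `c_{n-j+1} = +` and `h_{j-1} ≤ j - 2`.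
(Indices of `c` are 1-indexed in the informal description; here `c_{n-j+1}`
is the entry of `c : Fin n → Bool` at the 0-indexed position `n - j`.) -/
def hseq (n : ℕ) (c : Clan n) : ℕ → ℕ
  | 0 => 0
  | j + 1 =>
    let p := hseq n c j
    if hj : n - (j + 1) < n then
      if c ⟨n - (j + 1), hj⟩ = false then p
      else if p = j then p + 1
      else if p + 1 ≤ j then p + 2
      else p
    else p

/-- `J(c)`: the set of odd `j` with `1 ≤ j ≤ n - 1` such that `h_j(c) = j` and
`c_{n-j} = •` (1-indexed), i.e. the entry at 0-indexed position `n - j - 1` is `•`. -/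
def Jset (n : ℕ) (c : Clan n) : Set ℕ :=
  {j | j % 2 = 1 ∧ 1 ≤ j ∧ j ≤ n - 1 ∧ hseq n c j = j ∧
    ∀ h : n - j - 1 < n, c ⟨n - j - 1, h⟩ = false}

/-- The recursively defined set `D(c)` of clans indexing the terms of the
characteristic cycle of `L_c`: for a clan of length `0` (hence for length `1`)
it is the singleton `{c}`; `D((+, c')) = {(+, d') : d' ∈ D(c')}`;
`D((•, c')) = {(•, d') : d' ∈ D(c')}` unless `n` is even and `h_{n-1}(c') = n-1`,
in which case `D((•, c')) = {(•, d') : d' ∈ D(c')} ∪ {(+, d') : d' ∈ D(c')}`. -/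
def Dset : (n : ℕ) → Clan n → Set (Clan n)
  | 0, c => {c}
  | n + 1, c =>
    let c' : Clan n := fun i => c i.succ
    if c 0 = true then
      {d | d 0 = true ∧ (fun i : Fin n => d i.succ) ∈ Dset n c'}
    else if (n + 1) % 2 = 0 ∧ hseq n c' n = n then
      {d | (fun i : Fin n => d i.succ) ∈ Dset n c'}
    else
      {d | d 0 = false ∧ (fun i : Fin n => d i.succ) ∈ Dset n c'}

/-- `N(n)`: the number of clans of length `n` with `J(c) = ∅`, i.e. whose
characteristic cycle is irreducible. -/
noncomputable def Ncount (n : ℕ) : ℕ :=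
  {c : Clan n | Jset n c = ∅}.ncard

/-- `N(n, j)`: the number of clans of length `n` with `J(c) = ∅` and `h_n(c) = j`. -/
noncomputable def Ncj (n j : ℕ) : ℕ :=
  {c : Clan n | Jset n c = ∅ ∧ hseq n c n = j}.ncard

def freePositions (n : ℕ) (c : Clan n) : Set (Fin n) :=
  {i | ∃ j ∈ Jset n c, (i : ℕ) = n - j - 1}

lemma hseq_succ_of_le {n : ℕ} (c : Clan (n + 1)) {j : ℕ} (hj : j ≤ n) :
    hseq (n + 1) c j = hseq n (Fin.tail c) j := by
  induction j with
  | zero => rfl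
  | succ j ih =>
    have hlt : n - (j + 1) < n := by omega
    have hpos : c ⟨n + 1 - (j + 1), by omega⟩ = Fin.tail c ⟨n - (j + 1), hlt⟩ :=
      congrArg c (Fin.ext (by simp only [Fin.val_succ]; omega))
    simp only [hseq, dif_pos hlt, dif_pos (show n + 1 - (j + 1) < n + 1 by omega),
      ih (by omega), hpos]

lemma mem_Jset_succ_of_lt {n : ℕ} (c : Clan (n + 1)) {j : ℕ} (hj : j < n) :
    j ∈ Jset (n + 1) c ↔ j ∈ Jset n (Fin.tail c) := by
  have hpos : c ⟨n + 1 - j - 1, by omega⟩ = Fin.tail c ⟨n - j - 1, by omega⟩ :=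
    congrArg c (Fin.ext (by simp only [Fin.val_succ]; omega))
  simp only [Jset, Set.mem_ofPred_eq, hseq_succ_of_le c hj.le, hpos,
    show n + 1 - j - 1 < n + 1 by omega, show n - j - 1 < n by omega, forall_true_left,
    show j ≤ n + 1 - 1 ↔ j ≤ n - 1 by omega]

lemma mem_Jset_succ_self {n : ℕ} (c : Clan (n + 1)) :
    n ∈ Jset (n + 1) c ↔ n % 2 = 1 ∧ hseq n (Fin.tail c) n = n ∧ c 0 = false := by
  have hpos : (⟨n + 1 - n - 1, by omega⟩ : Fin (n + 1)) = 0 := Fin.ext (by simp)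
  simp only [Jset, Set.mem_ofPred_eq, hseq_succ_of_le c le_rfl, hpos,
    show n + 1 - n - 1 < n + 1 by omega, forall_true_left, le_refl, Nat.add_sub_cancel, true_and]
  exact and_congr_right fun hodd => and_iff_right (by omega)

lemma zero_mem_freePositions_succ {n : ℕ} (c : Clan (n + 1)) :
    0 ∈ freePositions (n + 1) c ↔ n ∈ Jset (n + 1) c := by
  constructor
  · rintro ⟨j, hj, hj0⟩
    obtain rfl : j = n := by
      have := hj.2.2.1
      simp only [Fin.val_zero] at hj0
      omega
    exact hj
  · exact fun hn => ⟨n, hn, by simp⟩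

lemma succ_mem_freePositions_succ {n : ℕ} (c : Clan (n + 1)) (k : Fin n) :
    k.succ ∈ freePositions (n + 1) c ↔ k ∈ freePositions n (Fin.tail c) := by
  simp only [freePositions, Set.mem_ofPred_eq, Fin.val_succ]
  constructor
  · rintro ⟨j, hj, hk⟩
    exact ⟨j, (mem_Jset_succ_of_lt c (by omega)).1 hj, by omega⟩
  · rintro ⟨j, hj, hk⟩
    have hjn : j < n := by have := hj.2.2.1; omega
    exact ⟨j, (mem_Jset_succ_of_lt c hjn).2 hj, by omega⟩

lemma mem_Dset_succ {n : ℕ} (c d : Clan (n + 1)) :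
    d ∈ Dset (n + 1) c ↔
      (n ∈ Jset (n + 1) c ∨ d 0 = c 0) ∧ Fin.tail d ∈ Dset n (Fin.tail c) := by
  have hodd : (n + 1) % 2 = 0 ↔ n % 2 = 1 := by omega
  rw [Dset, mem_Jset_succ_self]
  split_ifs with hc hn
  · simp [Fin.tail_def, hc]
  · simp [Fin.tail_def, hodd.1 hn.1, hn.2, hc]
  · rw [hodd] at hn
    simp only [Fin.tail_def, Bool.not_eq_true] at hc hn ⊢
    simp [hc, hn]

/-- `D(c)` consists exactly of the clans agreeing with `c` at every position
other than the positions `n - j` (1-indexed; `n - j - 1` in 0-indexed terms)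
for `j ∈ J(c)`. -/
theorem stmt9 (n : ℕ) (c : Clan n) :
    Dset n c =
      {d : Clan n | ∀ i : Fin n, (¬ ∃ j ∈ Jset n c, (i : ℕ) = n - j - 1) → d i = c i} := by
  change Dset n c = {d | ∀ i, i ∉ freePositions n c → d i = c i}
  induction n with
  | zero => ext d; simp [Dset, funext_iff]
  | succ n ih =>
    ext d
    rw [mem_Dset_succ, ih, Set.mem_ofPred_eq, Set.mem_ofPred_eq, Fin.forall_fin_succ,
      zero_mem_freePositions_succ, or_iff_not_imp_left]
    simp only [succ_mem_freePositions_succ, Fin.tail]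
end

section
/- Let N(n) denote the number of clans c ∈ {+,•}ⁿ such that J(c) = ∅ (equivalently, the associated characteristic cycle is irreducible), where J(c) = {j odd, 1 ≤ j ≤ n-1 : h_j(c) = j and c_{n-j} = •}. Then N(2l) = binomial(2l+1, l) and N(2l+1) = 2·N(2l). -/
/-!
Write `hslack n c = n - h_n(c)`. Prepending `+` to a clan lowers its slack by one (keeping it at `0`
if it is `0`), prepending `•` raises it by one, and `J` stays empty unless `•` is prepended to a
clan of odd length and slack `0`. Hence the slack of a clan with `J = ∅` is even at even lengths,
and over two steps it moves by `+2, 0, 0, -2`, except that at slack `0` the move "`+`, then `•`"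
is forbidden. So `U l e = NcountSlack (2l) (2e)` satisfies
`U (l+1) (e+1) = U l e + 2 U l (e+1) + U l (e+2)` and `U (l+1) 0 = 3 U l 0 + U l 1`, which is solved
by `U l e = C(2l+1, l+1+e)`, and `N(2l) = U l 0`. At odd length `2l+1` the first entry is free: it
could only enter `J` through the even index `j = 2l`.
-/

theorem ncard_setOf_fin_succ_pi {α : Type*} [Fintype α] {n : ℕ} (p : (Fin (n + 1) → α) → Prop) :
    {c : Fin (n + 1) → α | p c}.ncard = ∑ a, {d : Fin n → α | p (Fin.cons a d)}.ncard := by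
  simp only [← Nat.card_coe_set_eq, Set.coe_ofPred]
  rw [← Nat.card_sigma]
  exact Nat.card_congr ((Equiv.subtypeEquiv (Fin.consEquiv fun _ => α) fun _ => Iff.rfl).symm.trans
    (Equiv.subtypeProdEquivSigmaSubtype fun a d => p (Fin.cons a d)))

theorem Nat.choose_add_two_add_two (n k : ℕ) :
    (n + 2).choose (k + 2) = n.choose k + 2 * n.choose (k + 1) + n.choose (k + 2) := by
  rw [Nat.choose_succ_succ' (n + 1), Nat.choose_succ_succ' n k, Nat.choose_succ_succ' n (k + 1)]
  ring

lemma hseq_le (n : ℕ) (c : Clan n) (j : ℕ) : hseq n c j ≤ j := by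
  induction j with
  | zero => rfl
  | succ j ih =>
    simp only [hseq]
    split_ifs <;> omega

section Clan

variable {n : ℕ}

lemma hseq_cons_of_le (b : Bool) (d : Clan n) {j : ℕ} (hj : j ≤ n) :
    hseq (n + 1) (Fin.cons b d) j = hseq n d j := by
  induction j with
  | zero => rfl
  | succ j ih =>
    have h₁ : n + 1 - (j + 1) < n + 1 := by omega
    have h₂ : n - (j + 1) < n := by omega
    have hpos : (⟨n + 1 - (j + 1), h₁⟩ : Fin (n + 1)) = Fin.succ ⟨n - (j + 1), h₂⟩ := by
      ext; simp; omega
    simp only [hseq, dif_pos h₁, dif_pos h₂, hpos, Fin.cons_succ, ih (by omega)]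

lemma hseq_cons_self (b : Bool) (d : Clan n) :
    hseq (n + 1) (Fin.cons b d) (n + 1) =
      if b then (if hseq n d n = n then n + 1 else hseq n d n + 2) else hseq n d n := by
  have h₀ : n + 1 - (n + 1) < n + 1 := by omega
  have hpos : (⟨n + 1 - (n + 1), h₀⟩ : Fin (n + 1)) = 0 := by ext; simp
  have := hseq_le n d n
  rw [hseq, dif_pos h₀, hpos, Fin.cons_zero, hseq_cons_of_le b d le_rfl]
  cases b <;> simp only [Bool.false_eq_true, Bool.true_eq_false, if_true, if_false]
  split_ifs <;> omega

lemma mem_Jset_cons_iff (b : Bool) (d : Clan n) (j : ℕ) :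
    j ∈ Jset (n + 1) (Fin.cons b d) ↔
      j ∈ Jset n d ∨ (j = n ∧ n % 2 = 1 ∧ hseq n d n = n ∧ b = false) := by
  simp only [Jset, Set.mem_ofPred_eq]
  rcases lt_trichotomy j n with hj | rfl | hj
  · have hidx : ∀ h, (⟨n + 1 - j - 1, h⟩ : Fin (n + 1)) = Fin.succ ⟨n - j - 1, by omega⟩ := by
      intro h; ext; simp; omega
    simp only [hidx, Fin.cons_succ, hseq_cons_of_le b d hj.le]
    constructor
    · rintro ⟨hodd, hone, hle, hfix, hdot⟩
      exact Or.inl ⟨hodd, hone, by omega, hfix, fun _ => hdot (by omega)⟩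
    · rintro (⟨hodd, hone, hle, hfix, hdot⟩ | ⟨rfl, -⟩)
      · exact ⟨hodd, hone, by omega, hfix, fun _ => hdot (by omega)⟩
      · omega
  · have hidx : ∀ h, (⟨j + 1 - j - 1, h⟩ : Fin (j + 1)) = 0 := by
      intro h; ext; simp
    simp only [hidx, Fin.cons_zero, hseq_cons_of_le b d le_rfl]
    constructor
    · rintro ⟨hodd, hone, hle, hfix, hdot⟩
      exact Or.inr ⟨trivial, hodd, hfix, hdot (by omega)⟩
    · rintro (⟨-, hone, hle, -, -⟩ | ⟨-, hodd, hfix, hdot⟩)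
      · omega
      · exact ⟨hodd, by omega, by omega, hfix, fun _ => hdot⟩
  · constructor
    · rintro ⟨-, -, hle, -, -⟩; omega
    · rintro (⟨-, -, hle, -, -⟩ | ⟨rfl, -⟩) <;> omega

lemma Jset_zero (c : Clan 0) : Jset 0 c = ∅ := by
  ext j
  simp only [Jset, Set.mem_ofPred_eq, Set.mem_empty_iff_false, iff_false]
  omega

def hslack (n : ℕ) (c : Clan n) : ℕ := n - hseq n c n

lemma hslack_eq_zero_iff (c : Clan n) : hslack n c = 0 ↔ hseq n c n = n := by
  have := hseq_le n c n
  simp only [hslack]; omega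

lemma hslack_cons (b : Bool) (d : Clan n) :
    hslack (n + 1) (Fin.cons b d) = if b then hslack n d - 1 else hslack n d + 1 := by
  have := hseq_le n d n
  simp only [hslack, hseq_cons_self]
  cases b <;> simp only [Bool.false_eq_true, if_true, if_false]
  · omega
  · split_ifs <;> omega

lemma Jset_cons_eq_empty_iff (b : Bool) (d : Clan n) :
    Jset (n + 1) (Fin.cons b d) = ∅ ↔
      Jset n d = ∅ ∧ (n % 2 = 1 → hslack n d = 0 → b = true) := by
  simp only [Set.eq_empty_iff_forall_notMem, mem_Jset_cons_iff, hslack_eq_zero_iff]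
  constructor
  · intro h
    exact ⟨fun j hj => h j (Or.inl hj),
      fun hn hh => by simpa using fun hb => h n (Or.inr ⟨rfl, hn, hh, hb⟩)⟩
  · rintro ⟨h, h'⟩ j (hj | ⟨rfl, hn, hh, hb⟩)
    · exact h j hj
    · simp [h' hn hh] at hb

lemma hslack_mod_two (c : Clan n) (hc : Jset n c = ∅) :
    hslack n c % 2 = n % 2 ∨ hslack n c = 0 := by
  induction n with
  | zero => exact Or.inr rfl
  | succ n ih =>
    obtain ⟨b, d, rfl⟩ : ∃ b d, c = Fin.cons b d :=
      ⟨c 0, Fin.tail c, (Fin.cons_self_tail c).symm⟩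
    obtain ⟨hd, hb⟩ := (Jset_cons_eq_empty_iff b d).1 hc
    have := ih d hd
    rw [hslack_cons]
    cases b
    · have : ¬(n % 2 = 1 ∧ hslack n d = 0) := fun h => Bool.false_ne_true (hb h.1 h.2)
      simp only [Bool.false_eq_true, if_false]; omega
    · simp only [if_true]; omega

lemma ncard_cons_Jset_eq_empty (Q : ℕ → Prop) :
    {c : Clan (n + 1) | Jset (n + 1) c = ∅ ∧ Q (hslack (n + 1) c)}.ncard =
      {d : Clan n | Jset n d = ∅ ∧ ¬(n % 2 = 1 ∧ hslack n d = 0) ∧ Q (hslack n d + 1)}.ncard +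
        {d : Clan n | Jset n d = ∅ ∧ Q (hslack n d - 1)}.ncard := by
  rw [ncard_setOf_fin_succ_pi, Fintype.sum_bool, add_comm]
  simp only [Jset_cons_eq_empty_iff, hslack_cons, Bool.false_eq_true, if_true, if_false,
    imp_false, not_and, and_assoc, imp_true_iff, and_true]

lemma ncard_Jset_eq_empty_congr {P Q : Clan n → Prop}
    (h : ∀ c, Jset n c = ∅ → (P c ↔ Q c)) :
    {c : Clan n | Jset n c = ∅ ∧ P c}.ncard = {c : Clan n | Jset n c = ∅ ∧ Q c}.ncard :=
  congrArg Set.ncard (Set.ext fun c => and_congr_right (h c))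

end Clan

lemma ncard_cons_cons_Jset_eq_empty (l : ℕ) (Q : ℕ → Prop) :
    {c : Clan (2 * l + 2) | Jset (2 * l + 2) c = ∅ ∧ Q (hslack (2 * l + 2) c)}.ncard =
      {d : Clan (2 * l) | Jset (2 * l) d = ∅ ∧ Q (hslack (2 * l) d + 2)}.ncard +
        {d : Clan (2 * l) | Jset (2 * l) d = ∅ ∧ 2 ≤ hslack (2 * l) d ∧ Q (hslack (2 * l) d)}.ncard +
        {d : Clan (2 * l) | Jset (2 * l) d = ∅ ∧ Q (hslack (2 * l) d)}.ncard +
        {d : Clan (2 * l) | Jset (2 * l) d = ∅ ∧ Q (hslack (2 * l) d - 2)}.ncard := by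
  rw [ncard_cons_Jset_eq_empty,
    ncard_cons_Jset_eq_empty (fun s => ¬((2 * l + 1) % 2 = 1 ∧ s = 0) ∧ Q (s + 1)),
    ncard_cons_Jset_eq_empty (fun s => Q (s - 1)), ← add_assoc]
  congr 1; congr 1; congr 1
  · exact ncard_Jset_eq_empty_congr fun d _ => by simp
  · refine ncard_Jset_eq_empty_congr fun d hd => ?_
    have := hslack_mod_two d hd
    constructor
    · rintro ⟨hs, hQ⟩
      have : 2 ≤ hslack (2 * l) d := by omega
      exact ⟨this, by rwa [Nat.sub_add_cancel (by omega)] at hQ⟩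
    · rintro ⟨hs, hQ⟩
      exact ⟨by omega, by rwa [Nat.sub_add_cancel (by omega)]⟩
  · exact ncard_Jset_eq_empty_congr fun d _ => by simp

noncomputable def NcountSlack (n t : ℕ) : ℕ :=
  {c : Clan n | Jset n c = ∅ ∧ t ≤ hslack n c}.ncard

lemma Ncount_eq_NcountSlack_zero (n : ℕ) : Ncount n = NcountSlack n 0 := by
  simp only [Ncount, NcountSlack, zero_le, and_true]

lemma NcountSlack_zero (t : ℕ) : NcountSlack 0 t = if t = 0 then 1 else 0 := by
  have h_slack : ∀ c : Clan 0, hslack 0 c = 0 := fun _ => rfl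
  simp only [NcountSlack, Jset_zero, h_slack, true_and, Nat.le_zero]
  split_ifs with ht <;> simp [ht]

lemma NcountSlack_two_mul_add_two_zero (l : ℕ) :
    NcountSlack (2 * l + 2) 0 = 3 * NcountSlack (2 * l) 0 + NcountSlack (2 * l) 2 := by
  simp only [NcountSlack]
  rw [ncard_cons_cons_Jset_eq_empty]
  simp only [zero_le, and_true]
  ring

lemma NcountSlack_two_mul_add_two_succ (l e : ℕ) :
    NcountSlack (2 * l + 2) (2 * e + 2) =
      NcountSlack (2 * l) (2 * e) + 2 * NcountSlack (2 * l) (2 * e + 2) +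
        NcountSlack (2 * l) (2 * e + 4) := by
  simp only [NcountSlack]
  rw [ncard_cons_cons_Jset_eq_empty, two_mul ({d | _ ∧ _}.ncard), ← add_assoc]
  congr 1; congr 1; congr 1
  all_goals exact ncard_Jset_eq_empty_congr fun d _ => by omega

theorem NcountSlack_two_mul (l e : ℕ) :
    NcountSlack (2 * l) (2 * e) = (2 * l + 1).choose (l + 1 + e) := by
  induction l generalizing e with
  | zero =>
    rw [NcountSlack_zero]
    rcases e with _ | e
    · rfl
    · simp [Nat.choose_eq_zero_of_lt]
  | succ l ih =>
    rw [show 2 * (l + 1) = 2 * l + 2 by omega]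
    cases e with
    | zero =>
      have h₀ := ih 0
      have h₁ := ih 1
      rw [mul_zero] at h₀ ⊢
      rw [mul_one] at h₁
      rw [NcountSlack_two_mul_add_two_zero, h₀, h₁]
      have hpascal := Nat.choose_add_two_add_two (2 * l + 1) l
      have hsymm := Nat.choose_symm_half l
      ring_nf at hpascal hsymm ⊢
      omega
    | succ e =>
      rw [show 2 * (e + 1) = 2 * e + 2 by omega, NcountSlack_two_mul_add_two_succ,
        show 2 * e + 2 = 2 * (e + 1) by omega, show 2 * e + 4 = 2 * (e + 2) by omega, ih, ih, ih]
      have hpascal := Nat.choose_add_two_add_two (2 * l + 1) (l + 1 + e)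
      ring_nf at hpascal ⊢
      omega

lemma Ncount_two_mul_add_one (l : ℕ) : Ncount (2 * l + 1) = 2 * Ncount (2 * l) := by
  have h_even : ¬(2 * l % 2 = 1) := by omega
  rw [Ncount, Ncount, ncard_setOf_fin_succ_pi, Fintype.sum_bool]
  simp only [Jset_cons_eq_empty_iff, h_even, false_imp_iff, and_true]
  ring

/-- The number of highest weight Harish-Chandra modules of `Sp(2n, ℝ)` of
infinitesimal character `ρ` with irreducible characteristic cycle:
`N(2l) = C(2l+1, l)` and `N(2l+1) = 2 N(2l)`. -/
theorem stmt10 (l : ℕ) :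
    Ncount (2 * l) = Nat.choose (2 * l + 1) l ∧
    Ncount (2 * l + 1) = 2 * Ncount (2 * l) := by
  refine ⟨?_, Ncount_two_mul_add_one l⟩
  rw [Ncount_eq_NcountSlack_zero, ← Nat.choose_symm_half]
  simpa using NcountSlack_two_mul l 0
end

section
/- For 1 ≤ k ≤ n-2 in W(B_n), the elements w_k⁺ and w_{k+1}⁻ satisfy: α_{n-k} ∉ τ(w) and α_{n-k-1} ∈ τ(w) for both w ∈ {w_k⁺, w_{k+1}⁻}, and moreover w_k⁺ s_{α_{n-k}} = w_{k+1}⁺ or w_k⁺ s_{α_{n-k-1}} equals w_{k+1}⁺ according to the T_{αβ} operator rule, i.e., T_{α_{n-k},α_{n-k-1}}(w_k⁺) = w_{k+1}⁺ and T_{α_{n-k},α_{n-k-1}}(w_{k+1}⁻) = w_{k+2}⁻. -/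
open scoped BigOperators

/-- The standard basis vector `ε_{i+1}` (0-indexed `i`) of `ℚⁿ`. -/
def eN (n : ℕ) (i : ℕ) : Fin n → ℚ := fun j => if (j : ℕ) = i then 1 else 0

/-- The positive roots of type `B_n`:
`ε_i - ε_j`, `ε_i + ε_j` (`i < j`) and `ε_i`. -/
def PosB (n : ℕ) : Set (Fin n → ℚ) :=
  {v | (∃ i, i < n ∧ v = eN n i) ∨
    ∃ i j, i < j ∧ j < n ∧ (v = eN n i - eN n j ∨ v = eN n i + eN n j)}

/-- The length of a Weyl group element, i.e. the number of positive roots it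
sends to negative roots. -/
noncomputable def lenB (n : ℕ) (w : (Fin n → ℚ) → (Fin n → ℚ)) : ℕ :=
  Set.ncard {β | β ∈ PosB n ∧ -(w β) ∈ PosB n}

/-- The linear action on `ℚⁿ` of the cycle `(1, 2, …, i+1)` (1-indexed) on the
coordinates: it sends `ε_a ↦ ε_{π(a)}` where `π = Fin.cycleRange i`. -/
def cycAct (n : ℕ) (i : Fin n) : (Fin n → ℚ) → (Fin n → ℚ) :=
  fun v j => v ((Fin.cycleRange i)⁻¹ j)

/-- The longest element `w₀ = -Id` of `W(B_n)`. -/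
def w0B (n : ℕ) : (Fin n → ℚ) → (Fin n → ℚ) := fun v => -v

/-- The reflection `σ_{ε₁}` in `ε₁`, negating the first coordinate. -/
def sigB (n : ℕ) : (Fin n → ℚ) → (Fin n → ℚ) := fun v j => if (j : ℕ) = 0 then -(v j) else v j

/-- `w_k⁺ = w₀ ∘ w̃_k`, where `w̃_k` is the cycle `(1, 2, …, n-k+1)`,
realized with `i = ⟨n - k, _⟩`. -/
def wplus (n : ℕ) (i : Fin n) : (Fin n → ℚ) → (Fin n → ℚ) := w0B n ∘ cycAct n i

/-- `w_k⁻ = w₀ ∘ σ_{ε₁} ∘ w̃_k`. -/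
def wminus (n : ℕ) (i : Fin n) : (Fin n → ℚ) → (Fin n → ℚ) := w0B n ∘ sigB n ∘ cycAct n i

/-- The simple root `α_i` of `B_n` (1-indexed): `α_i = ε_i - ε_{i+1}` for
`i < n` and `α_n = ε_n`. -/
def simpleRoot (n i : ℕ) : Fin n → ℚ := if i < n then eN n (i - 1) - eN n i else eN n (n - 1)

/-- The set `Π` of simple roots of `B_n`. -/
def PiB (n : ℕ) : Set (Fin n → ℚ) := {v | ∃ i, 1 ≤ i ∧ i ≤ n ∧ v = simpleRoot n i}

/-- The `τ`-invariant `τ(w) = {α ∈ Π : w(α) < 0}`. -/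
def tauB (n : ℕ) (w : (Fin n → ℚ) → (Fin n → ℚ)) : Set (Fin n → ℚ) :=
  {α | α ∈ PiB n ∧ -(w α) ∈ PosB n}

/-- The standard inner product on `ℚⁿ`. -/
def dotB (n : ℕ) (v w : Fin n → ℚ) : ℚ := ∑ j, v j * w j

/-- The reflection `s_α` in a root `α`. -/
def reflB (n : ℕ) (α : Fin n → ℚ) : (Fin n → ℚ) → (Fin n → ℚ) :=
  fun v => v - ((2 * dotB n v α) / dotB n α α) • α

/-- The operator `T_{αβ}`: for `w` in its domain (`α ∉ τ(w)`, `β ∈ τ(w)`),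
`T_{αβ}(w) = w s_α` if `β ∉ τ(w s_α)`, and `T_{αβ}(w) = w s_β` if `α ∈ τ(w s_β)`. -/
noncomputable def Tab (n : ℕ) (α β : Fin n → ℚ) (w : (Fin n → ℚ) → (Fin n → ℚ)) :
    (Fin n → ℚ) → (Fin n → ℚ) := by
  classical
  exact if β ∈ tauB n (w ∘ reflB n α) then w ∘ reflB n β else w ∘ reflB n α

section helpers

variable {n : ℕ}

lemma eN_apply (a : ℕ) (j : Fin n) : eN n a j = if (j : ℕ) = a then 1 else 0 := rfl

lemma memPos_sub {a b : ℕ} (h : a < b) (hb : b < n) : eN n a - eN n b ∈ PosB n :=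
  Or.inr ⟨a, b, h, hb, Or.inl rfl⟩

lemma memPos_add {a b : ℕ} (h : a < b) (hb : b < n) : eN n a + eN n b ∈ PosB n :=
  Or.inr ⟨a, b, h, hb, Or.inr rfl⟩

lemma pos_neg_coord {v : Fin n → ℚ} (hv : v ∈ PosB n) {a : Fin n} (ha : v a < 0) :
    ∃ i : Fin n, (i : ℕ) < (a : ℕ) ∧ v i = 1 := by
  rcases hv with ⟨i, hi, rfl⟩ | ⟨i, j, hij, hj, rfl | rfl⟩
  · rw [eN_apply] at ha; split_ifs at ha <;> linarith
  · rw [Pi.sub_apply, eN_apply, eN_apply] at ha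
    split_ifs at ha with h1 h2 h2
    · linarith
    · linarith
    · refine ⟨⟨i, by omega⟩, by show i < (a : ℕ); omega, ?_⟩
      rw [Pi.sub_apply, eN_apply, eN_apply]
      simp [Nat.ne_of_lt hij]
    · linarith
  · rw [Pi.add_apply, eN_apply, eN_apply] at ha
    split_ifs at ha <;> linarith

lemma notPos_zero (hn : 0 < n) {v : Fin n → ℚ} (h0 : v ⟨0, hn⟩ < 0) : v ∉ PosB n := by
  intro hv
  obtain ⟨i, hi, _⟩ := pos_neg_coord hv h0
  simpa using hi

lemma dot_eN (v : Fin n → ℚ) (a : Fin n) : dotB n v (eN n a) = v a := by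
  unfold dotB eN
  rw [Finset.sum_eq_single a]
  · simp
  · intro b _ hb
    rw [if_neg (by simpa [Fin.val_inj] using hb), mul_zero]
  · simp

lemma dot_sub_right (v u w : Fin n → ℚ) : dotB n v (u - w) = dotB n v u - dotB n v w := by
  unfold dotB
  rw [← Finset.sum_sub_distrib]
  congr 1; funext j; rw [Pi.sub_apply]; ring

lemma reflB_swap (a b : Fin n) (hab : a ≠ b) (v : Fin n → ℚ) :
    reflB n (eN n a - eN n b) v = fun j => v (Equiv.swap a b j) := by
  have hbb : dotB n (eN n (a:ℕ) - eN n (b:ℕ)) (eN n (a:ℕ) - eN n (b:ℕ)) = 2 := by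
    rw [dot_sub_right, dot_eN, dot_eN, Pi.sub_apply, Pi.sub_apply,
      eN_apply, eN_apply, eN_apply, eN_apply]
    rw [if_pos rfl, if_pos rfl, if_neg (by simpa [Fin.val_inj] using hab),
      if_neg (by simpa [Fin.val_inj] using hab.symm)]
    norm_num
  funext j
  unfold reflB
  rw [Pi.sub_apply, Pi.smul_apply, dot_sub_right, dot_eN, dot_eN, hbb]
  rcases eq_or_ne j a with rfl | hja
  · rw [Equiv.swap_apply_left, Pi.sub_apply, eN_apply, eN_apply,
      if_pos rfl, if_neg (by simpa [Fin.val_inj] using hab)]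
    simp only [smul_eq_mul]; ring
  · rcases eq_or_ne j b with rfl | hjb
    · rw [Equiv.swap_apply_right, Pi.sub_apply, eN_apply, eN_apply,
        if_pos rfl, if_neg (by simpa [Fin.val_inj] using hab.symm)]
      simp only [smul_eq_mul]; ring
    · rw [Equiv.swap_apply_of_ne_of_ne hja hjb, Pi.sub_apply, eN_apply, eN_apply,
        if_neg (by simpa [Fin.val_inj] using hja), if_neg (by simpa [Fin.val_inj] using hjb)]
      simp

lemma refl_eN (a b c : Fin n) (hab : a ≠ b) :
    reflB n (eN n a - eN n b) (eN n c) = eN n (Equiv.swap a b c) := by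
  rw [reflB_swap a b hab]
  funext j
  show (if ((Equiv.swap a b j : Fin n) : ℕ) = (c : ℕ) then (1:ℚ) else 0)
      = if (j : ℕ) = ((Equiv.swap a b c : Fin n) : ℕ) then 1 else 0
  congr 1
  simp only [Fin.val_inj, eq_iff_iff]
  constructor
  · intro h; rw [← h]; simp
  · intro h; rw [h]; simp

lemma cycAct_eN (i a : Fin n) : cycAct n i (eN n a) = eN n (Fin.cycleRange i a) := by
  funext j
  unfold cycAct
  rw [eN_apply, eN_apply]
  congr 1
  simp only [Fin.val_inj, eq_iff_iff]
  constructor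
  · intro h; rw [← h]; simp
  · intro h; rw [h]; simp

lemma cycAct_sub (i : Fin n) (u v : Fin n → ℚ) :
    cycAct n i (u - v) = cycAct n i u - cycAct n i v := rfl

lemma sig_sub (u v : Fin n → ℚ) : sigB n (u - v) = sigB n u - sigB n v := by
  funext j
  unfold sigB
  rw [Pi.sub_apply, Pi.sub_apply]
  split_ifs <;> ring

lemma sig_eN_ne {a : Fin n} (ha : (a : ℕ) ≠ 0) : sigB n (eN n a) = eN n a := by
  funext j
  show (if (j : ℕ) = 0 then -(eN n (a:ℕ) j) else eN n (a:ℕ) j) = eN n (a:ℕ) j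
  split_ifs with h1
  · rw [eN_apply, if_neg (by omega)]; norm_num
  · rfl

lemma sig_eN_zero {a : Fin n} (ha : (a : ℕ) = 0) : sigB n (eN n a) = -eN n a := by
  funext j
  show (if (j : ℕ) = 0 then -(eN n (a:ℕ) j) else eN n (a:ℕ) j) = -(eN n (a:ℕ) j)
  split_ifs with h1
  · rfl
  · rw [eN_apply, if_neg (by omega)]; norm_num

lemma cycR_lt {i a : ℕ} (hi : i < n) (hai : a < i) :
    Fin.cycleRange ⟨i, hi⟩ ⟨a, by omega⟩ = ⟨a + 1, by omega⟩ := by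
  obtain ⟨N, rfl⟩ := Nat.exists_eq_succ_of_ne_zero (n := n) (by omega)
  rw [Fin.cycleRange_of_lt (by simpa [Fin.lt_def] using hai)]
  apply Fin.ext
  rw [Fin.val_add_one_of_lt (by rw [Fin.lt_iff_val_lt_val]; simp; omega)]

lemma cycR_self {i : ℕ} (hi : i < n) :
    Fin.cycleRange ⟨i, hi⟩ ⟨i, hi⟩ = ⟨0, by omega⟩ := by
  obtain ⟨N, rfl⟩ := Nat.exists_eq_succ_of_ne_zero (n := n) (by omega)
  rw [Fin.cycleRange_self]
  rfl

lemma cycR_gt {i a : ℕ} (ha : a < n) (hai : i < a) :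
    Fin.cycleRange ⟨i, by omega⟩ ⟨a, ha⟩ = ⟨a, ha⟩ := by
  obtain ⟨N, rfl⟩ := Nat.exists_eq_succ_of_ne_zero (n := n) (by omega)
  exact Fin.cycleRange_of_gt (by simpa [Fin.lt_def] using hai)

lemma cyc_swap {m : ℕ} (hm : m < n) (h1 : 1 ≤ m) :
    Fin.cycleRange ⟨m, hm⟩ * Equiv.swap ⟨m - 1, by omega⟩ ⟨m, hm⟩
      = Fin.cycleRange ⟨m - 1, by omega⟩ := by
  ext j
  rw [Equiv.Perm.mul_apply]
  rcases lt_trichotomy (j : ℕ) (m - 1) with hj | hj | hj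
  · rw [Equiv.swap_apply_of_ne_of_ne (by simp [Fin.ext_iff]; omega) (by simp [Fin.ext_iff]; omega)]
    have hje : j = ⟨(j : ℕ), j.isLt⟩ := rfl
    rw [hje, cycR_lt hm (by omega), cycR_lt (by omega) (by omega)]
  · have hje : j = ⟨m - 1, by omega⟩ := by simp [Fin.ext_iff]; omega
    rw [hje, Equiv.swap_apply_left, cycR_self hm, cycR_self (by omega)]
  · rcases eq_or_lt_of_le (Nat.succ_le_of_lt hj) with hj2 | hj2
    · have hje : j = ⟨m, hm⟩ := by simp [Fin.ext_iff]; omega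
      rw [hje, Equiv.swap_apply_right]
      rw [show (⟨m - 1, by omega⟩ : Fin n) = ⟨m - 1, by omega⟩ from rfl]
      rw [cycR_lt hm (by omega), cycR_gt hm (by omega)]
      simp [Fin.ext_iff]; omega
    · rw [Equiv.swap_apply_of_ne_of_ne (by simp [Fin.ext_iff]; omega) (by simp [Fin.ext_iff]; omega)]
      have hje : j = ⟨(j : ℕ), j.isLt⟩ := rfl
      rw [hje, cycR_gt j.isLt (by omega), cycR_gt j.isLt (by omega)]

lemma cycAct_refl {m : ℕ} (hm : m < n) (h1 : 1 ≤ m) :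
    cycAct n ⟨m, hm⟩ ∘ reflB n (eN n (m - 1) - eN n m) = cycAct n ⟨m - 1, by omega⟩ := by
  have hswap : ∀ j : Fin n, (Fin.cycleRange (⟨m - 1, by omega⟩ : Fin n))⁻¹ j
      = Equiv.swap (⟨m - 1, by omega⟩ : Fin n) ⟨m, hm⟩ ((Fin.cycleRange ⟨m, hm⟩)⁻¹ j) := by
    intro j
    rw [← cyc_swap hm h1, mul_inv_rev, Equiv.Perm.mul_apply, Equiv.swap_inv]
  funext v j
  show reflB n (eN n (m - 1) - eN n m) v ((Fin.cycleRange ⟨m, hm⟩)⁻¹ j)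
      = v ((Fin.cycleRange ⟨m - 1, by omega⟩)⁻¹ j)
  rw [show eN n (m - 1) = eN n ((⟨m - 1, by omega⟩ : Fin n) : ℕ) from rfl,
    show eN n m = eN n ((⟨m, hm⟩ : Fin n) : ℕ) from rfl,
    reflB_swap _ _ (by simp [Fin.ext_iff]; omega), hswap j]

lemma cycR_lt_val {i a : ℕ} (hi : i < n) (ha : a < n) (hai : a < i) :
    ((Fin.cycleRange ⟨i, hi⟩ ⟨a, ha⟩ : Fin n) : ℕ) = a + 1 := by rw [cycR_lt hi hai]

lemma cycR_self_val {i : ℕ} (hi : i < n) :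
    ((Fin.cycleRange ⟨i, hi⟩ ⟨i, hi⟩ : Fin n) : ℕ) = 0 := by rw [cycR_self hi]

lemma cycR_gt_val {i a : ℕ} (hi : i < n) (ha : a < n) (hai : i < a) :
    ((Fin.cycleRange ⟨i, by omega⟩ ⟨a, ha⟩ : Fin n) : ℕ) = a := by rw [cycR_gt ha hai]

lemma cycAct_eN' {a : ℕ} (ha : a < n) (i : Fin n) :
    cycAct n i (eN n a) = eN n ((Fin.cycleRange i ⟨a, ha⟩ : Fin n) : ℕ) := cycAct_eN i ⟨a, ha⟩

lemma sig_eN_ne' {a : ℕ} (ha : a ≠ 0) : sigB n (eN n a) = eN n a := by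
  funext j
  show (if (j : ℕ) = 0 then -(eN n a j) else eN n a j) = eN n a j
  split_ifs with h1
  · rw [eN_apply, if_neg (by omega)]; norm_num
  · rfl

lemma sig_eN_zero' : sigB n (eN n 0) = -eN n 0 := by
  funext j
  show (if (j : ℕ) = 0 then -(eN n 0 j) else eN n 0 j) = -(eN n 0 j)
  split_ifs with h1
  · rfl
  · rw [eN_apply, if_neg h1]; norm_num

lemma dot_sub_left (u v w : Fin n → ℚ) : dotB n (u - v) w = dotB n u w - dotB n v w := by
  unfold dotB
  rw [← Finset.sum_sub_distrib]
  congr 1; funext j; rw [Pi.sub_apply]; ring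

lemma reflB_sub (α u v : Fin n → ℚ) :
    reflB n α (u - v) = reflB n α u - reflB n α v := by
  funext j
  simp only [reflB, Pi.sub_apply, Pi.smul_apply, smul_eq_mul, dot_sub_left]
  ring

end helpers

lemma key_lemma {n : ℕ} (m : ℕ) (hn : 3 ≤ n) (hm2 : 2 ≤ m) (hmn : m < n) :
    simpleRoot n m ∉ tauB n (wplus n ⟨m, hmn⟩) ∧
    simpleRoot n (m - 1) ∈ tauB n (wplus n ⟨m, hmn⟩) ∧
    simpleRoot n m ∉ tauB n (wminus n ⟨m - 1, by omega⟩) ∧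
    simpleRoot n (m - 1) ∈ tauB n (wminus n ⟨m - 1, by omega⟩) ∧
    Tab n (simpleRoot n m) (simpleRoot n (m - 1)) (wplus n ⟨m, hmn⟩)
      = wplus n ⟨m - 1, by omega⟩ ∧
    Tab n (simpleRoot n m) (simpleRoot n (m - 1)) (wminus n ⟨m - 1, by omega⟩)
      = wminus n ⟨m - 2, by omega⟩ := by
  have h0n : 0 < n := by omega
  have hm1 : m - 1 < n := by omega
  have hm2n : m - 2 < n := by omega
  have hα : simpleRoot n m = eN n (m - 1) - eN n m := by
    unfold simpleRoot; rw [if_pos hmn]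
  have hβ : simpleRoot n (m - 1) = eN n (m - 2) - eN n (m - 1) := by
    unfold simpleRoot; rw [if_pos hm1, show m - 1 - 1 = m - 2 from by omega]
  have hβPi : simpleRoot n (m - 1) ∈ PiB n := ⟨m - 1, by omega, by omega, rfl⟩
  have c1 : cycAct n ⟨m, hmn⟩ (simpleRoot n m) = eN n m - eN n 0 := by
    rw [hα, cycAct_sub, cycAct_eN' (show m - 1 < n by omega), cycAct_eN' hmn,
      cycR_lt_val hmn (show m - 1 < n by omega) (by omega), cycR_self_val hmn,
      show m - 1 + 1 = m from by omega]
  have p1 : simpleRoot n m ∉ tauB n (wplus n ⟨m, hmn⟩) := by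
    rintro ⟨-, hpos⟩
    rw [show wplus n ⟨m, hmn⟩ (simpleRoot n m)
        = -(cycAct n ⟨m, hmn⟩ (simpleRoot n m)) from rfl, neg_neg, c1] at hpos
    refine notPos_zero h0n ?_ hpos
    rw [Pi.sub_apply, eN_apply, eN_apply, if_neg (show ¬((0:ℕ) = m) by omega), if_pos rfl]
    norm_num
  have c2 : cycAct n ⟨m, hmn⟩ (simpleRoot n (m - 1)) = eN n (m - 1) - eN n m := by
    rw [hβ, cycAct_sub, cycAct_eN' hm2n, cycAct_eN' (show m - 1 < n by omega),
      cycR_lt_val hmn hm2n (by omega), cycR_lt_val hmn (show m - 1 < n by omega) (by omega),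
      show m - 2 + 1 = m - 1 from by omega, show m - 1 + 1 = m from by omega]
  have p2 : simpleRoot n (m - 1) ∈ tauB n (wplus n ⟨m, hmn⟩) := by
    refine ⟨hβPi, ?_⟩
    rw [show wplus n ⟨m, hmn⟩ (simpleRoot n (m - 1))
        = -(cycAct n ⟨m, hmn⟩ (simpleRoot n (m - 1))) from rfl, neg_neg, c2]
    exact memPos_sub (by omega) hmn
  have c3 : cycAct n ⟨m - 1, hm1⟩ (simpleRoot n m) = eN n 0 - eN n m := by
    rw [hα, cycAct_sub, cycAct_eN' (show m - 1 < n by omega), cycAct_eN' hmn,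
      cycR_self_val hm1, cycR_gt_val hm1 hmn (by omega)]
  have p3 : simpleRoot n m ∉ tauB n (wminus n ⟨m - 1, hm1⟩) := by
    rintro ⟨-, hpos⟩
    rw [show wminus n ⟨m - 1, hm1⟩ (simpleRoot n m)
        = -(sigB n (cycAct n ⟨m - 1, hm1⟩ (simpleRoot n m))) from rfl, neg_neg, c3,
      sig_sub, sig_eN_zero', sig_eN_ne' (by omega)] at hpos
    refine notPos_zero h0n ?_ hpos
    rw [Pi.sub_apply, Pi.neg_apply, eN_apply, eN_apply, if_pos rfl,
      if_neg (show ¬((0:ℕ) = m) by omega)]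
    norm_num
  have c4 : cycAct n ⟨m - 1, hm1⟩ (simpleRoot n (m - 1)) = eN n (m - 1) - eN n 0 := by
    rw [hβ, cycAct_sub, cycAct_eN' hm2n, cycAct_eN' (show m - 1 < n by omega),
      cycR_lt_val hm1 hm2n (by omega), cycR_self_val hm1,
      show m - 2 + 1 = m - 1 from by omega]
  have p4 : simpleRoot n (m - 1) ∈ tauB n (wminus n ⟨m - 1, hm1⟩) := by
    refine ⟨hβPi, ?_⟩
    rw [show wminus n ⟨m - 1, hm1⟩ (simpleRoot n (m - 1))
        = -(sigB n (cycAct n ⟨m - 1, hm1⟩ (simpleRoot n (m - 1)))) from rfl, neg_neg, c4,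
      sig_sub, sig_eN_ne' (by omega), sig_eN_zero', sub_neg_eq_add, add_comm]
    exact memPos_add (by omega) hm1
  have hcomp1 : wplus n ⟨m, hmn⟩ ∘ reflB n (simpleRoot n m) = wplus n ⟨m - 1, hm1⟩ := by
    rw [hα]
    unfold wplus
    rw [Function.comp_assoc, cycAct_refl hmn (by omega)]
  have p5 : simpleRoot n (m - 1) ∉ tauB n (wplus n ⟨m - 1, hm1⟩) := by
    rintro ⟨-, hpos⟩
    rw [show wplus n ⟨m - 1, hm1⟩ (simpleRoot n (m - 1))
        = -(cycAct n ⟨m - 1, hm1⟩ (simpleRoot n (m - 1))) from rfl, neg_neg, c4] at hpos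
    refine notPos_zero h0n ?_ hpos
    rw [Pi.sub_apply, eN_apply, eN_apply, if_neg (show ¬((0:ℕ) = m - 1) by omega), if_pos rfl]
    norm_num
  have t5 : Tab n (simpleRoot n m) (simpleRoot n (m - 1)) (wplus n ⟨m, hmn⟩)
      = wplus n ⟨m - 1, hm1⟩ := by
    unfold Tab
    rw [hcomp1, if_neg p5]
  have hne : (⟨m - 1, hm1⟩ : Fin n) ≠ ⟨m, hmn⟩ := Fin.ne_of_val_ne (show m - 1 ≠ m by omega)
  have hrβ : reflB n (simpleRoot n m) (simpleRoot n (m - 1)) = eN n (m - 2) - eN n m := by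
    rw [hα, hβ, reflB_sub,
      show eN n (m - 1) = eN n ((⟨m - 1, hm1⟩ : Fin n) : ℕ) from rfl,
      show eN n m = eN n ((⟨m, hmn⟩ : Fin n) : ℕ) from rfl,
      show eN n (m - 2) = eN n ((⟨m - 2, hm2n⟩ : Fin n) : ℕ) from rfl,
      refl_eN _ _ _ hne, refl_eN _ _ _ hne, Equiv.swap_apply_left,
      Equiv.swap_apply_of_ne_of_ne (Fin.ne_of_val_ne (show m - 2 ≠ m - 1 by omega))
        (Fin.ne_of_val_ne (show m - 2 ≠ m by omega))]
  have hyes : simpleRoot n (m - 1)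
      ∈ tauB n (wminus n ⟨m - 1, hm1⟩ ∘ reflB n (simpleRoot n m)) := by
    refine ⟨hβPi, ?_⟩
    show -(wminus n ⟨m - 1, hm1⟩ (reflB n (simpleRoot n m) (simpleRoot n (m - 1)))) ∈ PosB n
    rw [hrβ, show wminus n ⟨m - 1, hm1⟩ (eN n (m - 2) - eN n m)
        = -(sigB n (cycAct n ⟨m - 1, hm1⟩ (eN n (m - 2) - eN n m))) from rfl, neg_neg,
      cycAct_sub, cycAct_eN' hm2n, cycAct_eN' hmn, cycR_lt_val hm1 hm2n (by omega),
      cycR_gt_val hm1 hmn (by omega), show m - 2 + 1 = m - 1 from by omega,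
      sig_sub, sig_eN_ne' (by omega), sig_eN_ne' (by omega)]
    exact memPos_sub (by omega) hmn
  have hcomp2 : wminus n ⟨m - 1, hm1⟩ ∘ reflB n (simpleRoot n (m - 1))
      = wminus n ⟨m - 2, hm2n⟩ := by
    rw [hβ]
    unfold wminus
    have h := cycAct_refl (n := n) (m := m - 1) hm1 (by omega)
    have heN : eN n (m - 1 - 1) = eN n (m - 2) := by
      rw [show m - 1 - 1 = m - 2 from by omega]
    have hfin : (⟨m - 1 - 1, by omega⟩ : Fin n) = ⟨m - 2, hm2n⟩ :=
      Fin.ext (by show m - 1 - 1 = m - 2; omega)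
    rw [Function.comp_assoc, Function.comp_assoc, ← heN, h, hfin]
  have t6 : Tab n (simpleRoot n m) (simpleRoot n (m - 1)) (wminus n ⟨m - 1, hm1⟩)
      = wminus n ⟨m - 2, hm2n⟩ := by
    unfold Tab
    rw [if_pos hyes, hcomp2]
  exact ⟨p1, p2, p3, p4, t5, t6⟩


/-- For `1 ≤ k ≤ n - 2`: both `w_k⁺` and `w_{k+1}⁻` are in the domain of
`T_{α_{n-k}, α_{n-k-1}}` (i.e. `α_{n-k} ∉ τ(w)` and `α_{n-k-1} ∈ τ(w)`),
and `T_{α_{n-k}, α_{n-k-1}}(w_k⁺) = w_{k+1}⁺`,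
`T_{α_{n-k}, α_{n-k-1}}(w_{k+1}⁻) = w_{k+2}⁻`. -/
theorem stmt17 (n k : ℕ) (hn : 3 ≤ n) (hk1 : 1 ≤ k) (hk : k ≤ n - 2) :
    simpleRoot n (n - k) ∉ tauB n (wplus n ⟨n - k, by omega⟩) ∧
    simpleRoot n (n - k - 1) ∈ tauB n (wplus n ⟨n - k, by omega⟩) ∧
    simpleRoot n (n - k) ∉ tauB n (wminus n ⟨n - (k + 1), by omega⟩) ∧
    simpleRoot n (n - k - 1) ∈ tauB n (wminus n ⟨n - (k + 1), by omega⟩) ∧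
    Tab n (simpleRoot n (n - k)) (simpleRoot n (n - k - 1)) (wplus n ⟨n - k, by omega⟩)
      = wplus n ⟨n - (k + 1), by omega⟩ ∧
    Tab n (simpleRoot n (n - k)) (simpleRoot n (n - k - 1)) (wminus n ⟨n - (k + 1), by omega⟩)
      = wminus n ⟨n - (k + 2), by omega⟩ := by
  have e1 : (⟨n - (k + 1), by omega⟩ : Fin n) = ⟨n - k - 1, by omega⟩ := Fin.ext (by show n - (k+1) = n - k - 1; omega)
  have e2 : (⟨n - (k + 2), by omega⟩ : Fin n) = ⟨n - k - 2, by omega⟩ := Fin.ext (by show n - (k+2) = n - k - 2; omega)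
  rw [e1, e2]
  exact key_lemma (n - k) hn (by omega) (by omega)
end
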